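/- For every constant ε > 0 and graph G on n vertices with arboricity α, define Z_1 = V(G) and Z_{i+1} = {v ∈ Z_i : deg_{Z_i}(v) > (2+ε)α}. Then |Z_{i+1}| ≤ (2/(2+ε))|Z_i| for all i, and hence Z_i is empty for i > log_{(2+ε)/2}(n) + 1. -/

import Mathlib

open scoped Classical

/-!
Every vertex that survives a peeling round has more than `(2+ε)α` neighbours in `Z i`, while
the degrees inside `Z i` sum to twice its number of edges, which arboricity bounds by `α |Z i|`.
Hence `(2+ε)α |Z (i+1)| < 2α |Z i|` (Markov's inequality for degrees), so each round shrinks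
the set by the factor `2/(2+ε)`, and after more than `log_{(2+ε)/2} n` rounds fewer than one
vertex is left.
-/

open Finset

namespace SimpleGraph

variable {V : Type*} (G : SimpleGraph V)

theorem card_edges_within_eq_card_edgeFinset_induce [Fintype V] (S : Finset V) :
    #{e ∈ G.edgeFinset | ∀ x ∈ e, x ∈ S} = #(G.induce (S : Set V)).edgeFinset := by
  rw [← card_filter_edgeFinset_toFinset_subset]
  simp only [subset_iff, Sym2.mem_toFinset]

theorem degree_induce_eq_card_filter_adj (S : Finset V) (v : (S : Set V)) :
    (G.induce (S : Set V)).degree v = #{u ∈ S | G.Adj v u} := by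
  rw [← card_neighborFinset_eq_degree, ← card_map (Function.Embedding.subtype _)]
  congr 1
  ext u
  simp only [mem_map, mem_neighborFinset, comap_adj, Function.Embedding.subtype_apply,
    mem_filter]
  constructor
  · rintro ⟨w, hvw, rfl⟩
    exact ⟨w.2, hvw⟩
  · rintro ⟨hu, hvu⟩
    exact ⟨⟨u, hu⟩, hvu, rfl⟩

theorem sum_card_filter_adj_eq_two_mul_card_edges [Fintype V] (S : Finset V) :
    ∑ v ∈ S, #{u ∈ S | G.Adj v u} = 2 * #{e ∈ G.edgeFinset | ∀ x ∈ e, x ∈ S} := by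
  rw [card_edges_within_eq_card_edgeFinset_induce, ← sum_degrees_eq_twice_card_edges,
    ← sum_coe_sort S]
  exact Fintype.sum_congr _ _ fun v => (G.degree_induce_eq_card_filter_adj S v).symm

theorem card_edges_within_eq_zero_of_card_le_one [Fintype V] {S : Finset V} (hS : #S ≤ 1) :
    #{e ∈ G.edgeFinset | ∀ x ∈ e, x ∈ S} = 0 := by
  rw [card_edges_within_eq_card_edgeFinset_induce, ← Nat.le_zero]
  refine card_edgeFinset_le_card_choose_two.trans_eq (Nat.choose_eq_zero_of_lt ?_)
  simpa using hS.trans_lt one_lt_two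

theorem card_edges_within_le_mul_card [Fintype V] {α : ℕ}
    (harb : ∀ U : Finset V, 2 ≤ #U → #{e ∈ G.edgeFinset | ∀ x ∈ e, x ∈ U} ≤ α * (#U - 1))
    (S : Finset V) : #{e ∈ G.edgeFinset | ∀ x ∈ e, x ∈ S} ≤ α * #S := by
  rcases le_or_gt 2 #S with hS | hS
  · exact (harb S hS).trans (Nat.mul_le_mul_left α (Nat.sub_le _ _))
  · rw [G.card_edges_within_eq_zero_of_card_le_one (by omega)]
    exact Nat.zero_le _

theorem mul_card_high_degree_lt_two_mul_card_edges [Fintype V] {S : Finset V} {c : ℝ}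
    (hT : {v ∈ S | c < #{u ∈ S | G.Adj v u}}.Nonempty) :
    c * #{v ∈ S | c < #{u ∈ S | G.Adj v u}} < 2 * #{e ∈ G.edgeFinset | ∀ x ∈ e, x ∈ S} := by
  calc c * #{v ∈ S | c < #{u ∈ S | G.Adj v u}}
      = ∑ v ∈ S with c < #{u ∈ S | G.Adj v u}, c := by rw [sum_const, nsmul_eq_mul, mul_comm]
    _ < ∑ v ∈ S with c < #{u ∈ S | G.Adj v u}, (#{u ∈ S | G.Adj v u} : ℝ) :=
      sum_lt_sum_of_nonempty hT fun v hv => (mem_filter.mp hv).2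
    _ ≤ ∑ v ∈ S, (#{u ∈ S | G.Adj v u} : ℝ) :=
      sum_le_sum_of_subset_of_nonneg (filter_subset _ _) fun _ _ _ => Nat.cast_nonneg _
    _ = 2 * #{e ∈ G.edgeFinset | ∀ x ∈ e, x ∈ S} := by
      exact_mod_cast G.sum_card_filter_adj_eq_two_mul_card_edges S

theorem card_high_degree_le_two_div_mul_card [Fintype V] {α : ℕ}
    (harb : ∀ U : Finset V, 2 ≤ #U → #{e ∈ G.edgeFinset | ∀ x ∈ e, x ∈ U} ≤ α * (#U - 1))
    (S : Finset V) {c : ℝ} (hc : 0 < c) :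
    (#{v ∈ S | c * α < #{u ∈ S | G.Adj v u}} : ℝ) ≤ 2 / c * #S := by
  rcases eq_empty_or_nonempty {v ∈ S | c * α < #{u ∈ S | G.Adj v u}} with hT | hT
  · rw [hT, card_empty, Nat.cast_zero]
    positivity
  have hlt : (α : ℝ) * (c * #{v ∈ S | c * α < #{u ∈ S | G.Adj v u}}) < α * (2 * #S) := by
    calc (α : ℝ) * (c * #{v ∈ S | c * α < #{u ∈ S | G.Adj v u}})
        = c * α * #{v ∈ S | c * α < #{u ∈ S | G.Adj v u}} := by ring
      _ < 2 * #{e ∈ G.edgeFinset | ∀ x ∈ e, x ∈ S} :=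
        G.mul_card_high_degree_lt_two_mul_card_edges hT
      _ ≤ 2 * (α * #S) := by
        exact_mod_cast Nat.mul_le_mul_left 2 (G.card_edges_within_le_mul_card harb S)
      _ = α * (2 * #S) := by ring
  -- the strict inequality forces `α > 0`, so `α` can be cancelled
  rw [div_mul_eq_mul_div, le_div_iff₀ hc, mul_comm]
  exact (lt_of_mul_lt_mul_left hlt (Nat.cast_nonneg α)).le

end SimpleGraph

theorem pow_mul_le_of_le_inv_mul {f : ℕ → ℕ} {b : ℝ} (hb : 0 < b)
    (hf : ∀ k, (f (k + 1) : ℝ) ≤ b⁻¹ * f k) (k : ℕ) : b ^ k * f k ≤ f 0 := by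
  induction k with
  | zero => simp
  | succ k ih =>
    calc b ^ (k + 1) * f (k + 1) ≤ b ^ (k + 1) * (b⁻¹ * f k) := by gcongr; exact hf k
      _ = b ^ k * f k := by field_simp; ring
      _ ≤ f 0 := ih

theorem eq_zero_of_le_inv_mul_of_logb_lt {f : ℕ → ℕ} {b : ℝ} (hb : 1 < b)
    (hf : ∀ k, (f (k + 1) : ℝ) ≤ b⁻¹ * f k) {k : ℕ} (hk : Real.logb b (f 0) < k) : f k = 0 := by
  have hbk : b ^ k * f k ≤ f 0 := pow_mul_le_of_le_inv_mul (by linarith) hf k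
  rcases Nat.eq_zero_or_pos (f 0) with h0 | h0
  · rw [h0, Nat.cast_zero] at hbk
    exact Nat.le_zero.mp
      (by exact_mod_cast (mul_nonpos_iff_pos_imp_nonpos.mp hbk).1 (by positivity))
  have hlt : (f 0 : ℝ) < b ^ k := by
    rwa [Real.logb_lt_iff_lt_rpow hb (by exact_mod_cast h0), Real.rpow_natCast] at hk
  have : (f k : ℝ) < 1 := by
    by_contra! h
    nlinarith [pow_pos (zero_lt_one.trans hb) k]
  exact Nat.lt_one_iff.mp (by exact_mod_cast this)

/-- For `ε > 0`, with `Z 1 = V(G)` and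
`Z (i+1) = {v ∈ Z i : deg_{Z i}(v) > (2+ε)α}`, we have `|Z (i+1)| ≤ (2/(2+ε))|Z i|` for all
`i ≥ 1`, and `Z i` is empty for `i > log_{(2+ε)/2}(n) + 1`. -/
theorem stmt14 {V : Type*} [Fintype V] (G : SimpleGraph V) (α : ℕ) (ε : ℝ) (hε : 0 < ε)
    (harb : ∀ U : Finset V, 2 ≤ U.card →
      (G.edgeFinset.filter fun e => ∀ x ∈ e, x ∈ U).card ≤ α * (U.card - 1))
    (Z : ℕ → Finset V) (hZ1 : Z 1 = Finset.univ)
    (hZ : ∀ i, 1 ≤ i → Z (i+1) = (Z i).filter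
      fun v => ((2 + ε) * α : ℝ) < (((Z i).filter fun u => G.Adj v u).card : ℝ)) :
    (∀ i, 1 ≤ i → ((Z (i+1)).card : ℝ) ≤ (2 / (2 + ε)) * (Z i).card) ∧
    (∀ i : ℕ, 1 ≤ i →
      Real.logb ((2 + ε) / 2) (Fintype.card V) + 1 < (i : ℝ) → Z i = ∅) := by
  have hstep : ∀ i, 1 ≤ i → ((Z (i+1)).card : ℝ) ≤ (2 / (2 + ε)) * (Z i).card := by
    intro i hi
    rw [hZ i hi]
    exact G.card_high_degree_le_two_div_mul_card harb (Z i) (by linarith)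
  refine ⟨hstep, fun i hi hlog => ?_⟩
  obtain ⟨k, rfl⟩ : ∃ k, i = k + 1 := ⟨i - 1, by omega⟩
  have hdecay : ∀ j, ((Z (j + 1 + 1)).card : ℝ) ≤ ((2 + ε) / 2)⁻¹ * (Z (j + 1)).card := by
    intro j
    rw [inv_div]
    exact hstep (j + 1) (by omega)
  refine card_eq_zero.mp (eq_zero_of_le_inv_mul_of_logb_lt (f := fun j => (Z (j + 1)).card)
    (by linarith) hdecay ?_)
  simp only [zero_add, hZ1, card_univ]
  push_cast at hlog
  linarith
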